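/- arXiv:1207.3600 — 7 statements merged into one kernel-verified Lean document; each statement's English description precedes it below -/
import Mathlib

section
/- Let (M, Ω, ω) and (N, Σ, σ) be regular permutation sets with base points, and let f : M → N and Φ : Ω → Σ be maps with Φ(ω) = σ. Then the pair (f, Φ) satisfies Φ(m(α)) = f(m)(Φ(α)) for all m ∈ M and α ∈ Ω if and only if both of the following hold: (1) f(m)(σ) = Φ(m(ω)) for all m ∈ M; (2) f is a loop homomorphism from (M, ⊗_ω) to (N, ⊗_σ). -/
/-- `(f, Φ)` is a morphism of pointed regular permutation sets
iff `f(m)(σ) = Φ(m(ω))` for all `m` and `f` is a loop homomorphism for the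
induced loop structures. -/
theorem stmt2 {Ω S : Type*} (M : Set (Equiv.Perm Ω)) (N : Set (Equiv.Perm S))
    (h1M : (1 : Equiv.Perm Ω) ∈ M) (h1N : (1 : Equiv.Perm S) ∈ N)
    (hregM : ∀ α β : Ω, ∃! m : M, (m : Equiv.Perm Ω) α = β)
    (hregN : ∀ α β : S, ∃! n : N, (n : Equiv.Perm S) α = β)
    (ω : Ω) (σ : S)
    (otimesM : M → M → M)
    (hotimesM : ∀ m n : M,
      (otimesM m n : Equiv.Perm Ω) ω = (m : Equiv.Perm Ω) ((n : Equiv.Perm Ω) ω))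
    (otimesN : N → N → N)
    (hotimesN : ∀ m n : N,
      (otimesN m n : Equiv.Perm S) σ = (m : Equiv.Perm S) ((n : Equiv.Perm S) σ))
    (f : M → N) (Φ : Ω → S) (hΦ : Φ ω = σ) :
    (∀ (m : M) (α : Ω), Φ ((m : Equiv.Perm Ω) α) = (f m : Equiv.Perm S) (Φ α)) ↔
      ((∀ m : M, (f m : Equiv.Perm S) σ = Φ ((m : Equiv.Perm Ω) ω)) ∧
        (∀ m n : M, f (otimesM m n) = otimesN (f m) (f n))) := by
  constructor
  · intro h
    refine ⟨fun m => by rw [← hΦ, ← h], fun m n => ?_⟩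
    obtain ⟨_, _, huniq⟩ := hregN σ (Φ ((m : Equiv.Perm Ω) ((n : Equiv.Perm Ω) ω)))
    have e1 : (f (otimesM m n) : Equiv.Perm S) σ
        = Φ ((m : Equiv.Perm Ω) ((n : Equiv.Perm Ω) ω)) := by
      rw [← hΦ, ← h, hotimesM]
    have e2 : (otimesN (f m) (f n) : Equiv.Perm S) σ
        = Φ ((m : Equiv.Perm Ω) ((n : Equiv.Perm Ω) ω)) := by
      rw [hotimesN, ← hΦ, ← h, ← h]
    rw [huniq _ e1, huniq _ e2]
  · rintro ⟨h1, h2⟩ m α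
    obtain ⟨n, hn, -⟩ := hregM ω α
    calc Φ ((m : Equiv.Perm Ω) α) = Φ ((otimesM m n : Equiv.Perm Ω) ω) := by
          rw [hotimesM, hn]
      _ = (f (otimesM m n) : Equiv.Perm S) σ := (h1 _).symm
      _ = (f m : Equiv.Perm S) (Φ α) := by
          rw [h2, hotimesN, h1, hn]
end

section
/- The category of loops (objects: loops; morphisms: operation-preserving maps) is equivalent to the category of pointed regular permutation sets (objects: triples (M, Ω, ω) with M a regular permutation set on Ω and ω ∈ Ω; morphisms: pairs (f, Φ) with Φ(ω) = σ and Φ(m(α)) = f(m)(Φ(α)) for all m, α). An equivalence is given by the functor sending (M, Ω, ω) to the loop (Ω, ·_ω) and a morphism (f, Φ) to Φ. -/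
/-!
`F` is faithful because `(f, Φ)` is determined by `Φ`: `f m = μ⁻¹ (Φ (m ω))`. It is full because
`m α = m(ω) ·_ω α`, so a loop morphism `Φ` (which automatically preserves the identity) is
equivariant for `f m := μ⁻¹ (Φ (m ω))`. It is essentially surjective because the left
multiplications of a loop `L`, pointed at the identity, act regularly (by unique right division)
with `μ⁻¹ a = (a · _)`, so they induce exactly the operation of `L`.
-/

open CategoryTheory

/-- An object of the category of loops: a type with a binary operation having
a two-sided identity and unique left and right division. -/
structure LoopCat : Type 1 where
  carrier : Type
  mul : carrier → carrier → carrier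
  e : carrier
  e_mul : ∀ a, mul e a = a
  mul_e : ∀ a, mul a e = a
  divL : ∀ a b, ∃! x, mul a x = b
  divR : ∀ a b, ∃! y, mul y a = b

/-- A morphism of loops: an operation-preserving map. -/
@[ext]
structure LoopHom (L L' : LoopCat) where
  toFun : L.carrier → L'.carrier
  map_mul : ∀ a b, toFun (L.mul a b) = L'.mul (toFun a) (toFun b)

instance : Category LoopCat where
  Hom := LoopHom
  id L := ⟨_root_.id, fun _ _ => rfl⟩
  comp f g := ⟨g.toFun ∘ f.toFun, fun a b => by
    simp [Function.comp, f.map_mul, g.map_mul]⟩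
  id_comp _ := rfl
  comp_id _ := rfl
  assoc _ _ _ := rfl

/-- An object of the category of pointed regular permutation sets: a set `M`
of permutations of `pts` containing the identity and acting simply
transitively, with a base point. -/
structure RpsCat : Type 1 where
  pts : Type
  M : Set (Equiv.Perm pts)
  one_mem : 1 ∈ M
  reg : ∀ α β : pts, ∃! m : M, (m : Equiv.Perm pts) α = β
  pt : pts

/-- A morphism of pointed regular permutation sets: a pair `(f, Φ)` with
`Φ(ω) = σ` and `Φ(m(α)) = f(m)(Φ(α))`. -/
@[ext]
structure RpsHom (X Y : RpsCat) where
  f : X.M → Y.M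
  Φ : X.pts → Y.pts
  map_pt : Φ X.pt = Y.pt
  equivariant : ∀ (m : X.M) (α : X.pts),
    Φ ((m : Equiv.Perm X.pts) α) = (f m : Equiv.Perm Y.pts) (Φ α)

instance : Category RpsCat where
  Hom := RpsHom
  id X := ⟨_root_.id, _root_.id, rfl, fun _ _ => rfl⟩
  comp u v := ⟨v.f ∘ u.f, v.Φ ∘ u.Φ,
    by simp [Function.comp, u.map_pt, v.map_pt],
    fun m α => by simp [Function.comp, u.equivariant, v.equivariant]⟩
  id_comp _ := rfl
  comp_id _ := rfl
  assoc _ _ _ := rfl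

/-- `μ⁻¹(α)`: the unique element of `M` sending the base point to `α`. -/
noncomputable def minv (X : RpsCat) (α : X.pts) : X.M := (X.reg X.pt α).choose

lemma minv_spec (X : RpsCat) (α : X.pts) :
    (minv X α : Equiv.Perm X.pts) X.pt = α := (X.reg X.pt α).choose_spec.1

lemma minv_unique (X : RpsCat) (α : X.pts) (m : X.M)
    (h : (m : Equiv.Perm X.pts) X.pt = α) : m = minv X α :=
  (X.reg X.pt α).choose_spec.2 m h

/-- The loop `(Ω, ·_ω)` induced by a pointed regular permutation set:
`α ·_ω β = (μ⁻¹ α ∘ μ⁻¹ β)(ω)`. -/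
noncomputable def inducedLoop (X : RpsCat) : LoopCat where
  carrier := X.pts
  mul α β := (minv X α : Equiv.Perm X.pts) ((minv X β : Equiv.Perm X.pts) X.pt)
  e := X.pt
  e_mul := fun β => by
    show (minv X X.pt : Equiv.Perm X.pts) ((minv X β : Equiv.Perm X.pts) X.pt) = β
    rw [← minv_unique X X.pt ⟨1, X.one_mem⟩ rfl, minv_spec]
    rfl
  mul_e := fun α => by
    show (minv X α : Equiv.Perm X.pts) ((minv X X.pt : Equiv.Perm X.pts) X.pt) = α
    rw [minv_spec X X.pt]
    exact minv_spec X α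
  divL := fun a b => by
    simp only [minv_spec]
    exact ⟨(minv X a : Equiv.Perm X.pts).symm b,
      Equiv.apply_symm_apply _ _,
      fun y hy => by rw [← hy, Equiv.symm_apply_apply]⟩
  divR := fun a b => by
    simp only [minv_spec]
    obtain ⟨m, hm, hu⟩ := X.reg a b
    refine ⟨(m : Equiv.Perm X.pts) X.pt, ?_, ?_⟩
    · show (minv X ((m : Equiv.Perm X.pts) X.pt) : Equiv.Perm X.pts) a = b
      rw [← minv_unique X ((m : Equiv.Perm X.pts) X.pt) m rfl]
      exact hm
    · intro y hy
      have h := hu _ hy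
      rw [← h]
      exact (minv_spec X y).symm

/-- The functor from pointed regular permutation sets to loops, sending
`(M, Ω, ω)` to `(Ω, ·_ω)` and `(f, Φ)` to `Φ`. -/
noncomputable def F : RpsCat ⥤ LoopCat where
  obj := inducedLoop
  map {X Y} u := ⟨u.Φ, fun (a b : X.pts) => by
    have key : ∀ α, u.f (minv X α) = minv Y (u.Φ α) := fun α =>
      minv_unique Y (u.Φ α) _ (by rw [← u.map_pt, ← u.equivariant, minv_spec])
    show u.Φ ((minv X a : Equiv.Perm X.pts) ((minv X b : Equiv.Perm X.pts) X.pt))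
      = (minv Y (u.Φ a) : Equiv.Perm Y.pts) ((minv Y (u.Φ b) : Equiv.Perm Y.pts) Y.pt)
    rw [u.equivariant, u.equivariant, u.map_pt, key, key]⟩
  map_id _ := rfl
  map_comp _ _ := rfl

lemma minv_apply_pt (X : RpsCat) (m : X.M) :
    minv X ((m : Equiv.Perm X.pts) X.pt) = m :=
  (minv_unique X _ m rfl).symm

lemma inducedLoop_mul (X : RpsCat) (α β : X.pts) :
    (inducedLoop X).mul α β = (minv X α : Equiv.Perm X.pts) β :=
  congrArg (minv X α : Equiv.Perm X.pts) (minv_spec X β)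

lemma apply_eq_inducedLoop_mul (X : RpsCat) (m : X.M) (α : X.pts) :
    (m : Equiv.Perm X.pts) α = (inducedLoop X).mul ((m : Equiv.Perm X.pts) X.pt) α := by
  rw [inducedLoop_mul, minv_apply_pt]

lemma RpsHom.f_eq_minv {X Y : RpsCat} (u : RpsHom X Y) (m : X.M) :
    u.f m = minv Y (u.Φ ((m : Equiv.Perm X.pts) X.pt)) :=
  minv_unique Y _ _ (by rw [← u.map_pt, ← u.equivariant])

lemma LoopHom.map_e {L L' : LoopCat} (h : LoopHom L L') : h.toFun L.e = L'.e :=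
  (L'.divL (h.toFun L.e) (h.toFun L.e)).unique
    (by rw [← h.map_mul, L.e_mul]) (L'.mul_e _)

namespace LoopCat

variable (L : LoopCat)

lemma mul_left_bijective (a : L.carrier) : Function.Bijective (L.mul a) :=
  ⟨fun x _ hxy => (L.divL a (L.mul a x)).unique rfl hxy.symm, fun b => (L.divL a b).exists⟩

noncomputable def leftMul (a : L.carrier) : Equiv.Perm L.carrier :=
  Equiv.ofBijective _ (L.mul_left_bijective a)

noncomputable def toRps : RpsCat where
  pts := L.carrier
  M := Set.range L.leftMul
  one_mem := ⟨L.e, Equiv.ext L.e_mul⟩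
  reg α β := by
    obtain ⟨a, ha, hu⟩ := L.divR α β
    refine ⟨⟨L.leftMul a, a, rfl⟩, ha, ?_⟩
    rintro ⟨_, b, rfl⟩ hb
    rw [hu b hb]
  pt := L.e

lemma minv_toRps (a : L.carrier) : minv L.toRps a = ⟨L.leftMul a, a, rfl⟩ :=
  (minv_unique L.toRps a ⟨L.leftMul a, a, rfl⟩ (L.mul_e a)).symm

lemma inducedLoop_toRps_mul (a b : L.carrier) : (inducedLoop L.toRps).mul a b = L.mul a b :=
  (inducedLoop_mul L.toRps a b).trans (by rw [minv_toRps]; rfl)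

end LoopCat

instance : F.Faithful where
  map_injective {X Y} u v h := by
    have hΦ : u.Φ = v.Φ := congrArg LoopHom.toFun h
    exact RpsHom.ext (funext fun m => by rw [u.f_eq_minv, v.f_eq_minv, hΦ]) hΦ

instance : F.Full where
  map_surjective {X Y} h := by
    refine ⟨⟨fun m => minv Y (h.toFun ((m : Equiv.Perm X.pts) X.pt)), h.toFun, h.map_e, ?_⟩, rfl⟩
    intro m α
    rw [apply_eq_inducedLoop_mul X m α]
    exact (h.map_mul _ _).trans (inducedLoop_mul Y _ _)

instance : F.EssSurj where
  mem_essImage L :=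
    ⟨L.toRps, ⟨{ hom := ⟨id, L.inducedLoop_toRps_mul⟩
                 inv := ⟨id, fun a b => (L.inducedLoop_toRps_mul a b).symm⟩ }⟩⟩

/-- The category of loops is equivalent to the category of
pointed regular permutation sets, via the functor sending `(M, Ω, ω)` to
`(Ω, ·_ω)` and `(f, Φ)` to `Φ`. -/
theorem stmt7 : F.IsEquivalence := {}
end

section
/- The functor F from pointed regular permutation sets to loops is full: given a loop homomorphism Φ : (Ω, ·_ω) → (Σ, ·_σ), the pair (f_Φ, Φ) with f_Φ := ν⁻¹ ∘ Φ ∘ μ (where μ : M → Ω, m ↦ m(ω) and ν : N → Σ, n ↦ n(σ)) is a morphism of pointed regular permutation sets (M, Ω, ω) → (N, Σ, σ) satisfying F(f_Φ, Φ) = Φ. -/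
/-- The functor from pointed regular permutation sets to loops is
full: given a loop homomorphism `Φ : (Ω, ·_ω) → (S, ·_σ)`, the map
`f_Φ = ν⁻¹ ∘ Φ ∘ μ` (determined by `(f_Φ m)(σ) = Φ(m(ω))`) together with `Φ`
is a morphism of pointed regular permutation sets. -/
theorem stmt9 {Ω S : Type*} (M : Set (Equiv.Perm Ω)) (N : Set (Equiv.Perm S))
    (h1M : (1 : Equiv.Perm Ω) ∈ M) (h1N : (1 : Equiv.Perm S) ∈ N)
    (hregM : ∀ α β : Ω, ∃! m : M, (m : Equiv.Perm Ω) α = β)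
    (hregN : ∀ α β : S, ∃! n : N, (n : Equiv.Perm S) α = β)
    (ω : Ω) (σ : S)
    (mulΩ : Ω → Ω → Ω)
    (hmulΩ : ∀ m n : M,
      mulΩ ((m : Equiv.Perm Ω) ω) ((n : Equiv.Perm Ω) ω)
        = (m : Equiv.Perm Ω) ((n : Equiv.Perm Ω) ω))
    (mulS : S → S → S)
    (hmulS : ∀ m n : N,
      mulS ((m : Equiv.Perm S) σ) ((n : Equiv.Perm S) σ)
        = (m : Equiv.Perm S) ((n : Equiv.Perm S) σ))
    (Φ : Ω → S)
    (hΦhom : ∀ α β : Ω, Φ (mulΩ α β) = mulS (Φ α) (Φ β))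
    (f : M → N)
    (hf : ∀ m : M, (f m : Equiv.Perm S) σ = Φ ((m : Equiv.Perm Ω) ω)) :
    Φ ω = σ ∧
    (∀ (m : M) (α : Ω), Φ ((m : Equiv.Perm Ω) α) = (f m : Equiv.Perm S) (Φ α)) := by
  have e1 : (1 : Equiv.Perm Ω) ω = ω := rfl
  have hωω : mulΩ ω ω = ω := by
    have := hmulΩ ⟨1, h1M⟩ ⟨1, h1M⟩
    simpa using this
  have hΦω : Φ ω = σ := by
    obtain ⟨n, hn, -⟩ := hregN σ (Φ ω)
    have h2 : Φ ω = mulS (Φ ω) (Φ ω) := by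
      conv_lhs => rw [← hωω, hΦhom]
    rw [← hn] at h2
    rw [hmulS n n] at h2
    have : (n : Equiv.Perm S) σ = σ := by
      have := (n : Equiv.Perm S).injective h2
      exact this.symm
    rw [← hn, this]
  refine ⟨hΦω, ?_⟩
  intro m α
  obtain ⟨m', hm', -⟩ := hregM ω α
  have : Φ ((m : Equiv.Perm Ω) α) = (f m : Equiv.Perm S) ((f m' : Equiv.Perm S) σ) := by
    rw [← hm', ← hmulΩ m m', hΦhom, ← hf m, ← hf m', hmulS]
  rw [this, hf m', hm']
end

section
/- Let (F, +, ·) be a neardomain and define T₂(F) = { τ_{a,b} : F → F, x ↦ a + b·x | a ∈ F, b ∈ F \ {0} }. Then T₂(F) is a group under composition of maps, and its action on F is sharply 2-transitive: for any pairs (α₁, α₂), (β₁, β₂) of points of F with α₁ ≠ α₂ and β₁ ≠ β₂, there exists a unique τ ∈ T₂(F) with τ(α₁) = β₁ and τ(α₂) = β₂. -/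
/-- A neardomain `(F, +, ·)`: `(F, +)` is a loop with neutral element `zero`
in which `a + b = 0 → b + a = 0`; `(F \ {0}, ·)` is a group with neutral
element `one`; `0·a = 0`; multiplication is left distributive over addition;
and for all `a, b` there is `d_{a,b} ≠ 0` with
`a + (b + x) = (a + b) + d_{a,b}·x` for all `x`. -/
structure Neardomain (F : Type*) where
  add : F → F → F
  mul : F → F → F
  zero : F
  one : F
  zero_add : ∀ a, add zero a = a
  add_zero : ∀ a, add a zero = a
  addL : ∀ a b, ∃! x, add a x = b
  addR : ∀ a b, ∃! y, add y a = b
  neg_comm : ∀ a b, add a b = zero → add b a = zero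
  one_ne_zero : one ≠ zero
  mul_ne_zero : ∀ a b, a ≠ zero → b ≠ zero → mul a b ≠ zero
  mul_assoc : ∀ a b c, a ≠ zero → b ≠ zero → c ≠ zero →
    mul (mul a b) c = mul a (mul b c)
  one_mul : ∀ a, a ≠ zero → mul one a = a
  mul_one : ∀ a, a ≠ zero → mul a one = a
  inv_ex : ∀ a, a ≠ zero → ∃ b, b ≠ zero ∧ mul a b = one ∧ mul b a = one
  zero_mul : ∀ a, mul zero a = zero
  left_distrib : ∀ a b c, mul a (add b c) = add (mul a b) (mul a c)
  d_ex : ∀ a b, ∃ d, d ≠ zero ∧ ∀ x, add a (add b x) = add (add a b) (mul d x)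

namespace Neardomain

variable {F : Type*} (D : Neardomain F)

lemma add_left_cancel' {a x y : F} (h : D.add a x = D.add a y) : x = y := by
  obtain ⟨z, _, hu⟩ := D.addL a (D.add a y)
  exact (hu x h).trans (hu y rfl).symm

lemma mul_zero' (a : F) : D.mul a D.zero = D.zero := by
  have h := D.left_distrib a D.zero D.zero
  rw [D.zero_add] at h
  have h2 : D.add (D.mul a D.zero) (D.mul a D.zero)
      = D.add (D.mul a D.zero) D.zero := by rw [D.add_zero]; exact h.symm
  exact D.add_left_cancel' h2

lemma one_mul' (x : F) : D.mul D.one x = x := by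
  by_cases hx : x = D.zero
  · subst hx; exact D.mul_zero' D.one
  · exact D.one_mul x hx

lemma mul_left_cancel' {b x y : F} (hb : b ≠ D.zero)
    (h : D.mul b x = D.mul b y) : x = y := by
  obtain ⟨b', hb', hbb', hb'b⟩ := D.inv_ex b hb
  by_cases hx : x = D.zero
  · subst hx
    rw [D.mul_zero'] at h
    by_contra hy
    exact D.mul_ne_zero b y hb (fun e => hy e.symm) h.symm
  · by_cases hy : y = D.zero
    · subst hy; rw [D.mul_zero'] at h
      exact absurd h (D.mul_ne_zero b x hb hx)
    · calc x = D.mul D.one x := (D.one_mul x hx).symm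
        _ = D.mul (D.mul b' b) x := by rw [hb'b]
        _ = D.mul b' (D.mul b x) := D.mul_assoc b' b x hb' hb hx
        _ = D.mul b' (D.mul b y) := by rw [h]
        _ = D.mul (D.mul b' b) y := (D.mul_assoc b' b y hb' hb hy).symm
        _ = y := by rw [hb'b, D.one_mul y hy]

lemma mul_assoc' {a b : F} (ha : a ≠ D.zero) (hb : b ≠ D.zero) (x : F) :
    D.mul a (D.mul b x) = D.mul (D.mul a b) x := by
  by_cases hx : x = D.zero
  · subst hx; rw [D.mul_zero', D.mul_zero', D.mul_zero']
  · exact (D.mul_assoc a b x ha hb hx).symm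

lemma ext01 {f g : F → F}
    (hf : ∃ a b, b ≠ D.zero ∧ f = fun x => D.add a (D.mul b x))
    (hg : ∃ a b, b ≠ D.zero ∧ g = fun x => D.add a (D.mul b x))
    (h0 : f D.zero = g D.zero) (h1 : f D.one = g D.one) : f = g := by
  obtain ⟨a, b, hb, rfl⟩ := hf
  obtain ⟨c, d, hd, rfl⟩ := hg
  simp only at h0 h1
  rw [D.mul_zero', D.mul_zero', D.add_zero, D.add_zero] at h0
  subst h0
  rw [D.mul_one b hb, D.mul_one d hd] at h1
  have hbd := D.add_left_cancel' h1
  subst hbd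
  rfl

lemma tau_inj {a b : F} (hb : b ≠ D.zero) {x y : F}
    (h : D.add a (D.mul b x) = D.add a (D.mul b y)) : x = y :=
  D.mul_left_cancel' hb (D.add_left_cancel' h)

lemma tau_surj {a b : F} (hb : b ≠ D.zero) (y : F) :
    ∃ x, D.add a (D.mul b x) = y := by
  obtain ⟨z, hz, _⟩ := D.addL a y
  by_cases h0 : z = D.zero
  · refine ⟨D.zero, ?_⟩
    rw [D.mul_zero', D.add_zero]
    rw [h0] at hz
    rwa [D.add_zero] at hz
  · obtain ⟨b', hb', hbb', _⟩ := D.inv_ex b hb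
    refine ⟨D.mul b' z, ?_⟩
    rw [D.mul_assoc' hb hb' z, hbb', D.one_mul' z]
    exact hz

lemma comp_mem {a b c d : F} (hb : b ≠ D.zero) (hd : d ≠ D.zero) :
    ∃ a' b', b' ≠ D.zero ∧
      ((fun x => D.add a (D.mul b x)) ∘ (fun x => D.add c (D.mul d x)))
        = fun x => D.add a' (D.mul b' x) := by
  obtain ⟨e, he, hE⟩ := D.d_ex a (D.mul b c)
  have hbd := D.mul_ne_zero b d hb hd
  refine ⟨D.add a (D.mul b c), D.mul e (D.mul b d),
    D.mul_ne_zero _ _ he hbd, ?_⟩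
  funext x
  simp only [Function.comp]
  rw [D.left_distrib, hE, D.mul_assoc' hb hd x, D.mul_assoc' he hbd x]

end Neardomain

/-- For a neardomain `F`, the set
`T₂(F) = { x ↦ a + b·x | a ∈ F, b ≠ 0 }` is a group under composition of maps
(contains the identity, is closed under composition, and has two-sided inverses),
and it acts sharply 2-transitively on `F`. -/
theorem stmt12 {F : Type*} (D : Neardomain F)
    (T2 : Set (F → F))
    (hT2 : T2 = {f | ∃ a b, b ≠ D.zero ∧ f = fun x => D.add a (D.mul b x)}) :
    (id ∈ T2) ∧
    (∀ f ∈ T2, ∀ g ∈ T2, f ∘ g ∈ T2) ∧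
    (∀ f ∈ T2, ∃ g ∈ T2, f ∘ g = id ∧ g ∘ f = id) ∧
    (∀ α₁ α₂ β₁ β₂ : F, α₁ ≠ α₂ → β₁ ≠ β₂ →
      ∃! τ : T2, (τ : F → F) α₁ = β₁ ∧ (τ : F → F) α₂ = β₂) := by
  have hid : id ∈ T2 := by
    rw [hT2]
    exact ⟨D.zero, D.one, D.one_ne_zero, by
      funext x; simp only [id_eq]; rw [D.one_mul', D.zero_add]⟩
  have comp_cl : ∀ f ∈ T2, ∀ g ∈ T2, f ∘ g ∈ T2 := by
    intro f hf g hg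
    rw [hT2] at hf hg ⊢
    obtain ⟨a, b, hb, rfl⟩ := hf
    obtain ⟨c, d, hd, rfl⟩ := hg
    exact D.comp_mem hb hd
  have ext01 : ∀ f ∈ T2, ∀ g ∈ T2,
      f D.zero = g D.zero → f D.one = g D.one → f = g := by
    intro f hf g hg
    rw [hT2] at hf hg
    exact D.ext01 hf hg
  have trans01 : ∀ β₁ β₂ : F, β₁ ≠ β₂ →
      ∃ f ∈ T2, f D.zero = β₁ ∧ f D.one = β₂ := by
    intro β₁ β₂ hne
    obtain ⟨b, hb, _⟩ := D.addL β₁ β₂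
    have hb0 : b ≠ D.zero := by
      intro h; rw [h, D.add_zero] at hb; exact hne hb
    refine ⟨fun x => D.add β₁ (D.mul b x), ?_, ?_, ?_⟩
    · rw [hT2]; exact ⟨β₁, b, hb0, rfl⟩
    · show D.add β₁ (D.mul b D.zero) = β₁
      rw [D.mul_zero', D.add_zero]
    · show D.add β₁ (D.mul b D.one) = β₂
      rw [D.mul_one b hb0]; exact hb
  have hbij : ∀ f ∈ T2, Function.Bijective f := by
    intro f hf
    rw [hT2] at hf
    obtain ⟨a, b, hb, rfl⟩ := hf
    exact ⟨fun x y h => D.tau_inj hb h, fun y => D.tau_surj hb y⟩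
  have hinv : ∀ f ∈ T2, ∃ g ∈ T2, f ∘ g = id ∧ g ∘ f = id := by
    intro f hf
    obtain ⟨c, hc⟩ := (hbij f hf).2 D.zero
    obtain ⟨u, hu⟩ := (hbij f hf).2 D.one
    have hcu : c ≠ u := by
      intro h; rw [h, hu] at hc; exact D.one_ne_zero hc
    obtain ⟨g, hg, hg0, hg1⟩ := trans01 c u hcu
    have hfg : f ∘ g = id := by
      apply ext01 _ (comp_cl f hf g hg) _ hid
      · show f (g D.zero) = id D.zero
        rw [hg0, hc]; rfl
      · show f (g D.one) = id D.one
        rw [hg1, hu]; rfl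
    refine ⟨g, hg, hfg, ?_⟩
    funext x
    show g (f x) = x
    exact (hbij f hf).1 (congrFun hfg (f x))
  refine ⟨hid, comp_cl, hinv, ?_⟩
  intro α₁ α₂ β₁ β₂ hα hβ
  obtain ⟨ρ, hρ, hρ0, hρ1⟩ := trans01 α₁ α₂ hα
  obtain ⟨σ, hσ, hσ0, hσ1⟩ := trans01 β₁ β₂ hβ
  obtain ⟨ρi, hρi, hρρi, hρiρ⟩ := hinv ρ hρ
  have hτ := comp_cl σ hσ ρi hρi
  have hi0 : ρi α₁ = D.zero := by
    rw [← hρ0]; exact congrFun hρiρ D.zero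
  have hi1 : ρi α₂ = D.one := by
    rw [← hρ1]; exact congrFun hρiρ D.one
  have hv1 : (σ ∘ ρi) α₁ = β₁ := by
    show σ (ρi α₁) = β₁; rw [hi0]; exact hσ0
  have hv2 : (σ ∘ ρi) α₂ = β₂ := by
    show σ (ρi α₂) = β₂; rw [hi1]; exact hσ1
  have uniq : ∀ f ∈ T2, ∀ g ∈ T2, f α₁ = g α₁ → f α₂ = g α₂ → f = g := by
    intro f hf g hg h1 h2
    have hfρ : f ∘ ρ = g ∘ ρ := by
      apply ext01 _ (comp_cl f hf ρ hρ) _ (comp_cl g hg ρ hρ)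
      · show f (ρ D.zero) = g (ρ D.zero); rw [hρ0]; exact h1
      · show f (ρ D.one) = g (ρ D.one); rw [hρ1]; exact h2
    funext x
    obtain ⟨y, rfl⟩ := (hbij ρ hρ).2 x
    exact congrFun hfρ y
  refine ⟨⟨σ ∘ ρi, hτ⟩, ⟨hv1, hv2⟩, ?_⟩
  rintro ⟨τ', hτ'⟩ ⟨h1', h2'⟩
  exact Subtype.ext (uniq τ' hτ' (σ ∘ ρi) hτ (h1'.trans hv1.symm) (h2'.trans hv2.symm))
end

section
/- Let G be a sharply 2-transitive permutation group on Ω with #Ω ≥ 2, and let J be its set of involutions. Then exactly one of the following holds: every element of J has exactly one fixed point, or every element of J is fixed-point-free. Moreover, any two involutions in G are conjugate. -/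
/-- In a sharply 2-transitive permutation group on a set with at
least 2 elements, exactly one of the following holds: every involution has
exactly one fixed point, or every involution is fixed-point-free. Moreover any
two involutions are conjugate. -/
theorem stmt15 {Ω : Type*} (G : Subgroup (Equiv.Perm Ω))
    (hΩ : ∃ a b : Ω, a ≠ b)
    (hsharp : ∀ α₁ α₂ β₁ β₂ : Ω, α₁ ≠ α₂ → β₁ ≠ β₂ →
      ∃! g : G, (g : Equiv.Perm Ω) α₁ = β₁ ∧ (g : Equiv.Perm Ω) α₂ = β₂) :
    Xor'
      (∀ j : G, j ^ 2 = 1 → j ≠ 1 → ∃! x : Ω, (j : Equiv.Perm Ω) x = x)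
      (∀ j : G, j ^ 2 = 1 → j ≠ 1 → ∀ x : Ω, (j : Equiv.Perm Ω) x ≠ x) ∧
    (∀ j k : G, j ^ 2 = 1 → j ≠ 1 → k ^ 2 = 1 → k ≠ 1 →
      ∃ g : G, g * j * g⁻¹ = k) := by
  -- a nontrivial element fixes at most one point
  have huniq : ∀ g : G, ∀ x y : Ω, x ≠ y → (g : Equiv.Perm Ω) x = x →
      (g : Equiv.Perm Ω) y = y → g = 1 := by
    intro g x y hxy hx hy
    obtain ⟨h, -, hu⟩ := hsharp x y x y hxy hxy
    have h1 := hu g ⟨hx, hy⟩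
    have h2 := hu 1 ⟨rfl, rfl⟩
    rw [h1, h2]
  -- involutions square to identity pointwise
  have hsq : ∀ j : G, j ^ 2 = 1 → ∀ x : Ω,
      (j : Equiv.Perm Ω) ((j : Equiv.Perm Ω) x) = x := by
    intro j hj x
    have := congrArg (fun h : G => (h : Equiv.Perm Ω) x) hj
    simpa [sq] using this
  -- nontrivial element moves some point
  have hmove : ∀ j : G, j ≠ 1 → ∃ a : Ω, (j : Equiv.Perm Ω) a ≠ a := by
    intro j hj
    by_contra h
    push_neg at h
    exact hj (by
      have : (j : Equiv.Perm Ω) = 1 := Equiv.ext fun x => h x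
      exact Subtype.ext this)
  -- any two involutions are conjugate
  have hconj : ∀ j k : G, j ^ 2 = 1 → j ≠ 1 → k ^ 2 = 1 → k ≠ 1 →
      ∃ g : G, g * j * g⁻¹ = k := by
    intro j k hj2 hj1 hk2 hk1
    obtain ⟨a, ha⟩ := hmove j hj1
    obtain ⟨c, hc⟩ := hmove k hk1
    set b := (j : Equiv.Perm Ω) a with hb
    set d := (k : Equiv.Perm Ω) c with hd
    have hab : a ≠ b := fun h => ha h.symm
    have hcd : c ≠ d := fun h => hc h.symm
    obtain ⟨g, ⟨hga, hgb⟩, -⟩ := hsharp a b c d hab hcd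
    refine ⟨g, ?_⟩
    obtain ⟨h, -, hu⟩ := hsharp c d d c hcd (Ne.symm hcd)
    have hgic : ((g⁻¹ : G) : Equiv.Perm Ω) c = a := by
      have := congrArg (fun z => ((g⁻¹ : G) : Equiv.Perm Ω) z) hga
      simpa [← Equiv.Perm.mul_apply, ← Subgroup.coe_mul] using this.symm
    have hgid : ((g⁻¹ : G) : Equiv.Perm Ω) d = b := by
      have := congrArg (fun z => ((g⁻¹ : G) : Equiv.Perm Ω) z) hgb
      simpa [← Equiv.Perm.mul_apply, ← Subgroup.coe_mul] using this.symm
    have e1 : (↑(g * j * g⁻¹) : Equiv.Perm Ω) c = d := by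
      rw [Subgroup.coe_mul, Equiv.Perm.mul_apply, hgic, Subgroup.coe_mul,
        Equiv.Perm.mul_apply, ← hb, hgb]
    have e2 : (↑(g * j * g⁻¹) : Equiv.Perm Ω) d = c := by
      have hjb : (j : Equiv.Perm Ω) b = a := by rw [hb]; exact hsq j hj2 a
      rw [Subgroup.coe_mul, Equiv.Perm.mul_apply, hgid, Subgroup.coe_mul,
        Equiv.Perm.mul_apply, hjb, hga]
    have e3 : (k : Equiv.Perm Ω) d = c := by rw [hd]; exact hsq k hk2 c
    have h1 := hu (g * j * g⁻¹) ⟨e1, e2⟩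
    have h2 := hu k ⟨rfl, e3⟩
    rw [h1, h2]
  refine ⟨?_, hconj⟩
  -- there exists an involution
  obtain ⟨a, b, hab⟩ := hΩ
  obtain ⟨j₀, ⟨hja, hjb⟩, -⟩ := hsharp a b b a hab hab.symm
  have hj₀2 : j₀ ^ 2 = 1 := by
    apply huniq (j₀ ^ 2) a b hab
    · show ((j₀ ^ 2 : G) : Equiv.Perm Ω) a = a
      rw [SubmonoidClass.coe_pow, sq, Equiv.Perm.mul_apply, hja, hjb]
    · show ((j₀ ^ 2 : G) : Equiv.Perm Ω) b = b
      rw [SubmonoidClass.coe_pow, sq, Equiv.Perm.mul_apply, hjb, hja]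
  have hj₀1 : j₀ ≠ 1 := by
    intro h
    rw [h] at hja
    exact hab (by simpa using hja)
  -- transfer of fixed points along conjugation
  have htrans : ∀ j k : G, j ^ 2 = 1 → j ≠ 1 → k ^ 2 = 1 → k ≠ 1 →
      (∃ x : Ω, (j : Equiv.Perm Ω) x = x) → ∃ y : Ω, (k : Equiv.Perm Ω) y = y := by
    intro j k hj2 hj1 hk2 hk1 ⟨x, hx⟩
    obtain ⟨g, hg⟩ := hconj j k hj2 hj1 hk2 hk1
    refine ⟨(g : Equiv.Perm Ω) x, ?_⟩
    have hcancel : ((g⁻¹ : G) : Equiv.Perm Ω) ((g : Equiv.Perm Ω) x) = x := by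
      rw [← Equiv.Perm.mul_apply, ← Subgroup.coe_mul, inv_mul_cancel,
        Subgroup.coe_one, Equiv.Perm.one_apply]
    rw [← hg, Subgroup.coe_mul, Equiv.Perm.mul_apply, hcancel, Subgroup.coe_mul,
      Equiv.Perm.mul_apply, hx]
  by_cases hfix : ∃ x : Ω, (j₀ : Equiv.Perm Ω) x = x
  · left
    constructor
    · intro j hj2 hj1
      obtain ⟨y, hy⟩ := htrans j₀ j hj₀2 hj₀1 hj2 hj1 hfix
      refine ⟨y, hy, fun z hz => ?_⟩
      by_contra hne
      exact hj1 (huniq j z y hne hz hy)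
    · intro h
      obtain ⟨x, hx⟩ := hfix
      exact h j₀ hj₀2 hj₀1 x hx
  · right
    constructor
    · intro j hj2 hj1 x hx
      exact hfix (htrans j j₀ hj2 hj1 hj₀2 hj₀1 ⟨x, hx⟩)
    · intro h
      obtain ⟨x, hx, -⟩ := h j₀ hj₀2 hj₀1
      exact hfix ⟨x, hx⟩
end

section
/- Let G be a sharply 2-transitive group on Ω (#Ω ≥ 2) with base point ω₀. Define A ⊆ G as follows: if every involution of G has a fixed point, let ν be the unique involution fixing ω₀ and set A = J∘ν = { j∘ν : j ∈ J }; if all involutions are fixed-point-free, set A = J ∪ {1}. Then (A, Ω, ω₀) is a regular permutation set on Ω: 1 ∈ A and for all α, β ∈ Ω there is a unique a ∈ A with a(α) = β. -/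
section Aux

variable {Ω : Type*} {G : Subgroup (Equiv.Perm Ω)}

private lemma coe_sq (g : G) (x : Ω) :
    ((g ^ 2 : G) : Equiv.Perm Ω) x = (g : Equiv.Perm Ω) ((g : Equiv.Perm Ω) x) := by
  rw [pow_two]
  simp [Equiv.Perm.mul_apply]

private lemma sq_apply {g : G} (h : g ^ 2 = 1) (x : Ω) :
    (g : Equiv.Perm Ω) ((g : Equiv.Perm Ω) x) = x := by
  rw [← coe_sq, h]
  simp

private lemma rigid
    (hsharp : ∀ α₁ α₂ β₁ β₂ : Ω, α₁ ≠ α₂ → β₁ ≠ β₂ →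
      ∃! g : G, (g : Equiv.Perm Ω) α₁ = β₁ ∧ (g : Equiv.Perm Ω) α₂ = β₂)
    {g : G} {α β : Ω} (hαβ : α ≠ β)
    (h1 : (g : Equiv.Perm Ω) α = α) (h2 : (g : Equiv.Perm Ω) β = β) : g = 1 :=
  (hsharp α β α β hαβ hαβ).unique ⟨h1, h2⟩ ⟨by simp, by simp⟩

/-- unique involution through a pair of distinct points -/
private lemma inv_pair
    (hsharp : ∀ α₁ α₂ β₁ β₂ : Ω, α₁ ≠ α₂ → β₁ ≠ β₂ →
      ∃! g : G, (g : Equiv.Perm Ω) α₁ = β₁ ∧ (g : Equiv.Perm Ω) α₂ = β₂)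
    {α β : Ω} (hαβ : α ≠ β) :
    ∃! j : G, j ^ 2 = 1 ∧ j ≠ 1 ∧ (j : Equiv.Perm Ω) α = β := by
  obtain ⟨g, ⟨hg1, hg2⟩, hgu⟩ := hsharp α β β α hαβ hαβ.symm
  have hgsq : g ^ 2 = 1 := by
    refine rigid hsharp hαβ ?_ ?_ <;> rw [coe_sq]
    · rw [hg1, hg2]
    · rw [hg2, hg1]
  have hgne : g ≠ 1 := by
    intro h
    rw [h] at hg1
    simp at hg1
    exact hαβ hg1
  refine ⟨g, ⟨hgsq, hgne, hg1⟩, ?_⟩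
  rintro j ⟨hjsq, hjne, hj1⟩
  have hj2 : (j : Equiv.Perm Ω) β = α := by
    rw [← hj1]; exact sq_apply hjsq α
  exact hgu j ⟨hj1, hj2⟩

/-- two involutions fixing the same point are equal -/
private lemma inv_fix_unique
    (hΩ : ∃ a b : Ω, a ≠ b)
    (hsharp : ∀ α₁ α₂ β₁ β₂ : Ω, α₁ ≠ α₂ → β₁ ≠ β₂ →
      ∃! g : G, (g : Equiv.Perm Ω) α₁ = β₁ ∧ (g : Equiv.Perm Ω) α₂ = β₂)
    {i j : G} {γ : Ω} (hisq : i ^ 2 = 1) (hine : i ≠ 1)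
    (hjsq : j ^ 2 = 1) (hjne : j ≠ 1)
    (hiγ : (i : Equiv.Perm Ω) γ = γ) (hjγ : (j : Equiv.Perm Ω) γ = γ) :
    i = j := by
  -- find a point α ≠ γ
  obtain ⟨a, b, hab⟩ := hΩ
  obtain ⟨α, hαγ⟩ : ∃ α : Ω, α ≠ γ := by
    by_cases h : a = γ
    · exact ⟨b, fun hb => hab (h ▸ hb ▸ rfl)⟩
    · exact ⟨a, h⟩
  -- i and j move α
  have hiα : (i : Equiv.Perm Ω) α ≠ α := fun h => hine (rigid hsharp hαγ h hiγ)
  have hjα : (j : Equiv.Perm Ω) α ≠ α := fun h => hjne (rigid hsharp hαγ h hjγ)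
  by_cases hij : (i : Equiv.Perm Ω) α = (j : Equiv.Perm Ω) α
  · exact ((inv_pair hsharp (Ne.symm hiα)).unique ⟨hisq, hine, rfl⟩
      ⟨hjsq, hjne, hij.symm⟩)
  -- otherwise conjugate i to an involution through (α, jα) and derive i = j
  obtain ⟨g, ⟨hgα, hgi⟩, -⟩ := hsharp α ((i : Equiv.Perm Ω) α) α ((j : Equiv.Perm Ω) α)
    (Ne.symm hiα) (Ne.symm hjα)
  set h : G := g * i * g⁻¹ with hh
  have hginv : ((g⁻¹ : G) : Equiv.Perm Ω) α = α := by
    have : ((g⁻¹ : G) : Equiv.Perm Ω) ((g : Equiv.Perm Ω) α) = α := by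
      simp [Equiv.Perm.mul_apply, ← Subgroup.coe_mul]
    rwa [hgα] at this
  have hii : i * i = 1 := by rw [← pow_two]; exact hisq
  have hhsq : h ^ 2 = 1 := by
    rw [pow_two, hh]
    simp only [mul_assoc, inv_mul_cancel_left]
    rw [← mul_assoc i i, hii]
    simp
  have hhne : h ≠ 1 := by
    intro h0
    apply hine
    have : i = g⁻¹ * h * g := by rw [hh]; group
    rw [h0] at this
    simpa using this
  have hhα : (h : Equiv.Perm Ω) α = (j : Equiv.Perm Ω) α := by
    show ((g * i * g⁻¹ : G) : Equiv.Perm Ω) α = _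
    rw [Subgroup.coe_mul, Subgroup.coe_mul, Equiv.Perm.mul_apply,
      Equiv.Perm.mul_apply, hginv, hgi]
  have hhj : h = j :=
    (inv_pair hsharp (Ne.symm hjα)).unique ⟨hhsq, hhne, hhα⟩ ⟨hjsq, hjne, rfl⟩
  -- j fixes g γ
  have hjgγ : (j : Equiv.Perm Ω) ((g : Equiv.Perm Ω) γ) = (g : Equiv.Perm Ω) γ := by
    rw [← hhj]
    show ((g * i * g⁻¹ : G) : Equiv.Perm Ω) _ = _
    rw [Subgroup.coe_mul, Subgroup.coe_mul, Equiv.Perm.mul_apply, Equiv.Perm.mul_apply]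
    have : ((g⁻¹ : G) : Equiv.Perm Ω) ((g : Equiv.Perm Ω) γ) = γ := by
      simp [Equiv.Perm.mul_apply, ← Subgroup.coe_mul]
    rw [this, hiγ]
  have hgγ : (g : Equiv.Perm Ω) γ = γ := by
    by_contra hne
    exact hjne (rigid hsharp hne hjgγ hjγ)
  have hg1 : g = 1 := rigid hsharp (Ne.symm hαγ) hgγ hgα
  have : h = i := by rw [hh, hg1]; group
  rw [← hhj, this]

/-- existence of an involution fixing a given point, given one fixing ω₀ -/
private lemma inv_fix_exists
    (hsharp : ∀ α₁ α₂ β₁ β₂ : Ω, α₁ ≠ α₂ → β₁ ≠ β₂ →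
      ∃! g : G, (g : Equiv.Perm Ω) α₁ = β₁ ∧ (g : Equiv.Perm Ω) α₂ = β₂)
    {ω₀ : Ω} {ν : G} (hνsq : ν ^ 2 = 1) (hνne : ν ≠ 1)
    (hνω : (ν : Equiv.Perm Ω) ω₀ = ω₀) (γ : Ω) :
    ∃ j : G, j ^ 2 = 1 ∧ j ≠ 1 ∧ (j : Equiv.Perm Ω) γ = γ := by
  by_cases hγ : γ = ω₀
  · exact ⟨ν, hνsq, hνne, by rw [hγ]; exact hνω⟩
  · obtain ⟨s, ⟨hssq, hsne, hsω⟩, -⟩ := inv_pair hsharp (Ne.symm hγ)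
    -- s swaps ω₀ and γ
    have hsγ : (s : Equiv.Perm Ω) γ = ω₀ := by
      rw [← hsω]; exact sq_apply hssq ω₀
    refine ⟨s * ν * s, ?_, ?_, ?_⟩
    · have hss : s * s = 1 := by rw [← pow_two]; exact hssq
      have hνν2 : ν * ν = 1 := by rw [← pow_two]; exact hνsq
      rw [pow_two]
      simp only [mul_assoc]
      rw [← mul_assoc s s, hss, one_mul, ← mul_assoc ν ν, hνν2, one_mul]
      exact hss
    · intro h0
      apply hνne
      have : ν = s⁻¹ * (s * ν * s) * s⁻¹ := by
        simp only [mul_assoc, inv_mul_cancel_left]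
        simp
      rw [h0] at this
      have hsinv : s⁻¹ = s := by
        rw [inv_eq_iff_mul_eq_one, ← pow_two]; exact hssq
      rw [this, hsinv, mul_one, ← pow_two, hssq]
    · rw [Subgroup.coe_mul, Subgroup.coe_mul, Equiv.Perm.mul_apply,
        Equiv.Perm.mul_apply, hsγ, hνω, hsω]

end Aux

/-- Let `G` be sharply 2-transitive on `Ω` (`#Ω ≥ 2`) with base
point `ω₀`. If `char G ≠ 2` (there is an involution `ν` fixing `ω₀`), then
`A = J∘ν` is a regular permutation set on `Ω` with base point `ω₀`; if
`char G = 2` (all involutions are fixed-point-free), then `A = J ∪ {1}`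
(i.e. `{g | g² = 1}`) is a regular permutation set on `Ω`. -/
theorem stmt16 {Ω : Type*} (G : Subgroup (Equiv.Perm Ω))
    (hΩ : ∃ a b : Ω, a ≠ b)
    (hsharp : ∀ α₁ α₂ β₁ β₂ : Ω, α₁ ≠ α₂ → β₁ ≠ β₂ →
      ∃! g : G, (g : Equiv.Perm Ω) α₁ = β₁ ∧ (g : Equiv.Perm Ω) α₂ = β₂)
    (ω₀ : Ω) :
    (∀ ν : G, ν ^ 2 = 1 → ν ≠ 1 → (ν : Equiv.Perm Ω) ω₀ = ω₀ →
      ((1 : G) ∈ {g : G | ∃ j : G, j ^ 2 = 1 ∧ j ≠ 1 ∧ g = j * ν} ∧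
        ∀ α β : Ω, ∃! a : {g : G | ∃ j : G, j ^ 2 = 1 ∧ j ≠ 1 ∧ g = j * ν},
          ((a : G) : Equiv.Perm Ω) α = β)) ∧
    ((∀ j : G, j ^ 2 = 1 → j ≠ 1 → ∀ x : Ω, (j : Equiv.Perm Ω) x ≠ x) →
      ((1 : G) ∈ {g : G | g ^ 2 = 1} ∧
        ∀ α β : Ω, ∃! a : {g : G | g ^ 2 = 1},
          ((a : G) : Equiv.Perm Ω) α = β)) := by
  constructor
  · intro ν hνsq hνne hνω
    have hνν : ν * ν = 1 := by rw [← pow_two]; exact hνsq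
    constructor
    · exact ⟨ν, hνsq, hνne, hνν.symm⟩
    · intro α β
      set γ : Ω := (ν : Equiv.Perm Ω) α with hγ
      -- a = j * ν with j an involution; a α = β ↔ j γ = β
      have key : ∀ j : G, ((j * ν : G) : Equiv.Perm Ω) α = (j : Equiv.Perm Ω) γ := by
        intro j
        rw [Subgroup.coe_mul, Equiv.Perm.mul_apply]
      by_cases hβγ : β = γ
      · -- need the involution fixing γ
        obtain ⟨j, hjsq, hjne, hjγ⟩ := inv_fix_exists hsharp hνsq hνne hνω γ
        refine ⟨⟨j * ν, j, hjsq, hjne, rfl⟩, ?_, ?_⟩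
        · show ((j * ν : G) : Equiv.Perm Ω) α = β
          rw [key, hjγ, hβγ]
        · rintro ⟨a, j', hj'sq, hj'ne, rfl⟩ ha
          have ha' : ((j' * ν : G) : Equiv.Perm Ω) α = β := ha
          have hj'γ : (j' : Equiv.Perm Ω) γ = γ := by
            rw [← key j', ha', hβγ]
          have : j' = j := inv_fix_unique hΩ hsharp hj'sq hj'ne hjsq hjne hj'γ hjγ
          exact Subtype.ext (show j' * ν = j * ν by rw [this])
      · -- need the involution sending γ to β
        obtain ⟨j, ⟨hjsq, hjne, hjγ⟩, hju⟩ := inv_pair hsharp (Ne.symm hβγ)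
        refine ⟨⟨j * ν, j, hjsq, hjne, rfl⟩, ?_, ?_⟩
        · show ((j * ν : G) : Equiv.Perm Ω) α = β
          rw [key, hjγ]
        · rintro ⟨a, j', hj'sq, hj'ne, rfl⟩ ha
          have ha' : ((j' * ν : G) : Equiv.Perm Ω) α = β := ha
          have hj'γ : (j' : Equiv.Perm Ω) γ = β := by rw [← key j', ha']
          have : j' = j := hju j' ⟨hj'sq, hj'ne, hj'γ⟩
          exact Subtype.ext (show j' * ν = j * ν by rw [this])
  · intro hfpf
    constructor
    · show (1 : G) ^ 2 = 1
      simp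
    · intro α β
      by_cases hαβ : α = β
      · refine ⟨⟨1, by simp⟩, by simp [hαβ], ?_⟩
        rintro ⟨a, hasq⟩ ha
        have ha' : (a : Equiv.Perm Ω) α = β := ha
        by_cases h1 : a = 1
        · exact Subtype.ext h1
        · exact absurd (ha'.trans hαβ.symm) (hfpf a hasq h1 α)
      · obtain ⟨j, ⟨hjsq, hjne, hjα⟩, hju⟩ := inv_pair hsharp hαβ
        refine ⟨⟨j, hjsq⟩, hjα, ?_⟩
        rintro ⟨a, hasq⟩ ha
        have ha' : (a : Equiv.Perm Ω) α = β := ha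
        have hane : a ≠ 1 := by
          intro h; rw [h] at ha'; simp at ha'; exact hαβ ha'
        exact Subtype.ext (hju a ⟨hasq, hane, ha'⟩)
end

section
/- Let G be a sharply 2-transitive group on Ω (#Ω ≥ 2) with distinct base points ω₀, ω₁. Define α +₀ β := a(β), where a ∈ A is the unique element with a(ω₀) = α, and define α ·₁ β := g(β) where g ∈ G_{ω₀} is unique with g(ω₁) = α when α ≠ ω₀, and α ·₁ β := ω₀ when α = ω₀ or β = ω₀. Then (Ω, +₀, ·₁) is a neardomain with 0 = ω₀ and 1 = ω₁. -/
/-!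
The set `A` is a regular permutation set based at `ω₀` which is closed under inversion and under
conjugation by the stabilizer `G_{ω₀}`. Writing `τ_α ∈ A` for the element with `τ_α ω₀ = α`, we
get `α +₀ β = τ_α β`, and `(Ω \ {ω₀}, ·₁)` is a copy of the regular action of `G_{ω₀}`. Left
distributivity is the identity `g τ_β g⁻¹ = τ_{g β}` for `g ∈ G_{ω₀}`, and `d_{α,β}` is the image
of `ω₁` under `τ_{α+β}⁻¹ τ_α τ_β ∈ G_{ω₀}`.

When involutions have fixed points, `A = J ν` is regular because of the dichotomy for
`j ν α = β`: if `ν α ≠ β` then `j` is the unique involution swapping `ν α` and `β`, otherwise it is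
the unique involution fixing `β`. The latter uniqueness is read off at `ω₀` from the
well-definedness of `+₀`, and transported to other points by conjugation.
-/

section

variable {G Ω : Type*} [Group G] [MulAction G Ω]

variable (G Ω) in
def IsSharplyTwoTransitive : Prop :=
  ∀ α₁ α₂ β₁ β₂ : Ω, α₁ ≠ α₂ → β₁ ≠ β₂ → ∃! g : G, g • α₁ = β₁ ∧ g • α₂ = β₂

theorem orderOf_conj (g j : G) : orderOf (g * j * g⁻¹) = orderOf j :=
  (SemiconjBy.orderOf_eq g (SemiconjBy.conj_mk g j)).symm

theorem conj_smul_eq_self {g k : G} {γ ω : Ω} (hg : g • γ = ω) (hk : k • γ = γ) :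
    (g * k * g⁻¹) • ω = ω := by
  rw [← hg, mul_smul, mul_smul, inv_smul_smul, hk]

theorem smul_ne_of_smul_eq_self {g : G} {ω β : Ω} (hg : g • ω = ω) (hβ : β ≠ ω) : g • β ≠ ω := by
  rw [← hg]
  exact (MulAction.injective g).ne hβ

namespace IsSharplyTwoTransitive

theorem eq_of_smul_eq_smul (hG : IsSharplyTwoTransitive G Ω) {α β : Ω} (hαβ : α ≠ β)
    {g h : G} (hα : g • α = h • α) (hβ : g • β = h • β) : g = h :=
  (hG α β _ _ hαβ ((MulAction.injective h).ne hαβ)).unique ⟨hα, hβ⟩ ⟨rfl, rfl⟩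

theorem eq_one_of_smul_eq_self (hG : IsSharplyTwoTransitive G Ω) {α β : Ω} (hαβ : α ≠ β)
    {g : G} (hα : g • α = α) (hβ : g • β = β) : g = 1 :=
  hG.eq_of_smul_eq_smul hαβ (by rw [hα, one_smul]) (by rw [hβ, one_smul])

theorem exists_smul_eq (hG : IsSharplyTwoTransitive G Ω) (α β : Ω) : ∃ g : G, g • α = β := by
  by_cases hαβ : α = β
  · exact ⟨1, by rw [one_smul, hαβ]⟩
  · obtain ⟨g, ⟨hg, -⟩, -⟩ := hG α β β α hαβ (Ne.symm hαβ)
    exact ⟨g, hg⟩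

theorem exists_stabilizer_smul_eq (hG : IsSharplyTwoTransitive G Ω) {ω₀ ω₁ α : Ω}
    (hω : ω₀ ≠ ω₁) (hα : α ≠ ω₀) : ∃ g : G, g • ω₀ = ω₀ ∧ g • ω₁ = α :=
  (hG ω₀ ω₁ ω₀ α hω (Ne.symm hα)).exists

theorem exists_sq_eq_one_smul_eq (hG : IsSharplyTwoTransitive G Ω) {α β : Ω} (hαβ : α ≠ β) :
    ∃ j : G, j ^ 2 = 1 ∧ j • α = β := by
  obtain ⟨j, ⟨hα, hβ⟩, -⟩ := hG α β β α hαβ (Ne.symm hαβ)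
  exact ⟨j, hG.eq_one_of_smul_eq_self hαβ (by rw [sq, mul_smul, hα, hβ])
    (by rw [sq, mul_smul, hβ, hα]), hα⟩

theorem smul_eq_of_sq_eq_one {j : G} (hj : j ^ 2 = 1) {α β : Ω} (h : j • α = β) : j • β = α := by
  rw [← h, ← mul_smul, ← sq, hj, one_smul]

theorem eq_of_sq_eq_one_of_smul_eq (hG : IsSharplyTwoTransitive G Ω) {α β : Ω} (hαβ : α ≠ β)
    {j j' : G} (hj : j ^ 2 = 1) (hj' : j' ^ 2 = 1) (h : j • α = β) (h' : j' • α = β) :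
    j = j' :=
  hG.eq_of_smul_eq_smul hαβ (h.trans h'.symm)
    ((smul_eq_of_sq_eq_one hj h).trans (smul_eq_of_sq_eq_one hj' h').symm)

theorem eq_of_orderOf_eq_two_of_smul_eq_self (hG : IsSharplyTwoTransitive G Ω) {ω₀ : Ω}
    (h0 : ∀ j j' : G, orderOf j = 2 → orderOf j' = 2 → j • ω₀ = ω₀ → j' • ω₀ = ω₀ → j = j')
    {γ : Ω} {j j' : G} (hj : orderOf j = 2) (hj' : orderOf j' = 2) (hγ : j • γ = γ)
    (hγ' : j' • γ = γ) : j = j' := by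
  obtain ⟨g, hg⟩ := hG.exists_smul_eq γ ω₀
  exact conj_injective (h0 _ _ (by rwa [orderOf_conj]) (by rwa [orderOf_conj])
    (conj_smul_eq_self hg hγ) (conj_smul_eq_self hg hγ'))

theorem existsUnique_orderOf_eq_two_smul_eq (hG : IsSharplyTwoTransitive G Ω) {ω₀ : Ω} {ν : G}
    (hν : orderOf ν = 2) (hνω : ν • ω₀ = ω₀)
    (h0 : ∀ j j' : G, orderOf j = 2 → orderOf j' = 2 → j • ω₀ = ω₀ → j' • ω₀ = ω₀ → j = j')
    (γ β : Ω) : ∃! j : G, orderOf j = 2 ∧ j • γ = β := by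
  by_cases hγβ : γ = β
  · subst hγβ
    obtain ⟨g, hg⟩ := hG.exists_smul_eq ω₀ γ
    have hgν : orderOf (g * ν * g⁻¹) = 2 := by rwa [orderOf_conj]
    refine ⟨g * ν * g⁻¹, ⟨hgν, conj_smul_eq_self hg hνω⟩, fun j ⟨hj, hjγ⟩ => ?_⟩
    exact hG.eq_of_orderOf_eq_two_of_smul_eq_self h0 hj hgν hjγ (conj_smul_eq_self hg hνω)
  · obtain ⟨j, hj, hjγ⟩ := hG.exists_sq_eq_one_smul_eq hγβ
    have hj1 : j ≠ 1 := by
      rintro rfl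
      exact hγβ (by rwa [one_smul] at hjγ)
    refine ⟨j, ⟨orderOf_eq_prime_iff.2 ⟨hj, hj1⟩, hjγ⟩, fun j' ⟨hj', hj'γ⟩ => ?_⟩
    exact hG.eq_of_sq_eq_one_of_smul_eq hγβ (orderOf_eq_prime_iff.1 hj').1 hj hj'γ hjγ

theorem injOn_smul_of_add_smul {A : Set G} {ω₀ ω₁ : Ω}
    (hG : IsSharplyTwoTransitive G Ω) (hω : ω₀ ≠ ω₁) {add : Ω → Ω → Ω}
    (hadd : ∀ a ∈ A, ∀ β, add (a • ω₀) β = a • β) : Set.InjOn (· • ω₀) A :=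
  fun a ha a' ha' (h : a • ω₀ = a' • ω₀) =>
    hG.eq_of_smul_eq_smul hω h (by rw [← hadd a ha, ← hadd a' ha', h])

end IsSharplyTwoTransitive

/-- The regular permutation set `(A, Ω, ω₀)`, together with the closure properties that make
`α +₀ β` a neardomain addition. -/
structure IsInvariantRegularSet (A : Set G) (ω₀ : Ω) : Prop where
  one_mem : 1 ∈ A
  existsUnique_smul_eq : ∀ α β : Ω, ∃! a, a ∈ A ∧ a • α = β
  inv_mem : ∀ a ∈ A, a⁻¹ ∈ A
  conj_mem : ∀ g : G, g • ω₀ = ω₀ → ∀ a ∈ A, g * a * g⁻¹ ∈ A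

namespace IsSharplyTwoTransitive

theorem isInvariantRegularSet_sq_eq_one (hG : IsSharplyTwoTransitive G Ω) (ω₀ : Ω)
    (hfree : ∀ j : G, j ^ 2 = 1 → j ≠ 1 → ∀ x : Ω, j • x ≠ x) :
    IsInvariantRegularSet {g : G | g ^ 2 = 1} ω₀ where
  one_mem := one_pow 2
  existsUnique_smul_eq α β := by
    by_cases hαβ : α = β
    · subst hαβ
      refine ⟨1, ⟨one_pow 2, one_smul G α⟩, fun a ⟨ha, haα⟩ => ?_⟩
      by_contra ha1
      exact hfree a ha ha1 α haα
    · obtain ⟨j, hj, hjα⟩ := hG.exists_sq_eq_one_smul_eq hαβ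
      exact ⟨j, ⟨hj, hjα⟩, fun a ⟨ha, haα⟩ => hG.eq_of_sq_eq_one_of_smul_eq hαβ ha hj haα hjα⟩
  inv_mem a (ha : a ^ 2 = 1) := show a⁻¹ ^ 2 = 1 by rw [inv_pow, ha, inv_one]
  conj_mem g _ a (ha : a ^ 2 = 1) := show (g * a * g⁻¹) ^ 2 = 1 by
    rw [conj_pow, ha, mul_one, mul_inv_cancel]

theorem isInvariantRegularSet_mul_involution (hG : IsSharplyTwoTransitive G Ω) {ω₀ : Ω} {ν : G}
    (hν : orderOf ν = 2) (hνω : ν • ω₀ = ω₀)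
    (hinj : Set.InjOn (· • ω₀) {g : G | ∃ j : G, orderOf j = 2 ∧ g = j * ν}) :
    IsInvariantRegularSet {g : G | ∃ j : G, orderOf j = 2 ∧ g = j * ν} ω₀ := by
  have h0 (j j' : G) (hj : orderOf j = 2) (hj' : orderOf j' = 2) (hjω : j • ω₀ = ω₀)
      (hj'ω : j' • ω₀ = ω₀) : j = j' :=
    mul_right_cancel <| hinj ⟨j, hj, rfl⟩ ⟨j', hj', rfl⟩ <| by
      simp only [mul_smul, hνω, hjω, hj'ω]
  refine ⟨⟨ν, hν, by rw [← sq, ← hν, pow_orderOf_eq_one]⟩, fun α β => ?_, ?_, ?_⟩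
  · obtain ⟨j, ⟨hj, hjβ⟩, huniq⟩ := hG.existsUnique_orderOf_eq_two_smul_eq hν hνω h0 (ν • α) β
    refine ⟨j * ν, ⟨⟨j, hj, rfl⟩, by rwa [mul_smul]⟩, ?_⟩
    rintro _ ⟨⟨j', hj', rfl⟩, hj'β⟩
    rw [huniq j' ⟨hj', by rwa [mul_smul] at hj'β⟩]
  · rintro _ ⟨j, hj, rfl⟩
    refine ⟨ν * j * ν⁻¹, by rwa [orderOf_conj], ?_⟩
    rw [mul_inv_rev, inv_mul_cancel_right, inv_eq_self_of_orderOf_eq_two hν,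
      inv_eq_self_of_orderOf_eq_two hj]
  · rintro g hg _ ⟨j, hj, rfl⟩
    have hgν : g * ν * g⁻¹ = ν :=
      h0 _ _ (by rwa [orderOf_conj]) hν (conj_smul_eq_self hg hνω) hνω
    refine ⟨g * j * g⁻¹, by rwa [orderOf_conj], ?_⟩
    conv_rhs => rw [← hgν]
    group

end IsSharplyTwoTransitive

variable (G) in
/-- `mul` is the multiplication `α ·₁ β` defined through the stabilizer `G_{ω₀}`, which is
transitive on `Ω \ {ω₀}`. -/
structure IsStabilizerMul (ω₀ ω₁ : Ω) (mul : Ω → Ω → Ω) : Prop where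
  exists_smul_eq : ∀ α ≠ ω₀, ∃ g : G, g • ω₀ = ω₀ ∧ g • ω₁ = α
  mul_smul_eq : ∀ g : G, g • ω₀ = ω₀ → ∀ β, mul (g • ω₁) β = g • β
  zero_mul : ∀ β, mul ω₀ β = ω₀

namespace IsStabilizerMul

variable {ω₀ ω₁ : Ω} {mul : Ω → Ω → Ω}

theorem mul_ne_zero (hM : IsStabilizerMul G ω₀ ω₁ mul) {α β : Ω} (hα : α ≠ ω₀) (hβ : β ≠ ω₀) :
    mul α β ≠ ω₀ := by
  obtain ⟨g, hg, rfl⟩ := hM.exists_smul_eq α hα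
  rw [hM.mul_smul_eq g hg]
  exact smul_ne_of_smul_eq_self hg hβ

theorem mul_assoc (hM : IsStabilizerMul G ω₀ ω₁ mul) {α β : Ω} (hα : α ≠ ω₀) (hβ : β ≠ ω₀)
    (γ : Ω) : mul (mul α β) γ = mul α (mul β γ) := by
  obtain ⟨g, hg, rfl⟩ := hM.exists_smul_eq α hα
  obtain ⟨h, hh, rfl⟩ := hM.exists_smul_eq β hβ
  have hgh : (g * h) • ω₀ = ω₀ := by rw [mul_smul, hh, hg]
  rw [hM.mul_smul_eq g hg, ← mul_smul, hM.mul_smul_eq _ hgh, hM.mul_smul_eq h hh,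
    hM.mul_smul_eq g hg, mul_smul]

theorem one_mul (hM : IsStabilizerMul G ω₀ ω₁ mul) (β : Ω) : mul ω₁ β = β := by
  simpa only [one_smul] using hM.mul_smul_eq (1 : G) (one_smul G ω₀) β

theorem mul_one (hM : IsStabilizerMul G ω₀ ω₁ mul) {α : Ω} (hα : α ≠ ω₀) : mul α ω₁ = α := by
  obtain ⟨g, hg, rfl⟩ := hM.exists_smul_eq α hα
  exact hM.mul_smul_eq g hg ω₁

theorem exists_inv (hM : IsStabilizerMul G ω₀ ω₁ mul) (hω : ω₀ ≠ ω₁) {α : Ω} (hα : α ≠ ω₀) :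
    ∃ β, β ≠ ω₀ ∧ mul α β = ω₁ ∧ mul β α = ω₁ := by
  obtain ⟨g, hg, rfl⟩ := hM.exists_smul_eq α hα
  have hg' : g⁻¹ • ω₀ = ω₀ := by rw [inv_smul_eq_iff, hg]
  refine ⟨g⁻¹ • ω₁, smul_ne_of_smul_eq_self hg' (Ne.symm hω), ?_, ?_⟩
  · rw [hM.mul_smul_eq g hg, smul_inv_smul]
  · rw [hM.mul_smul_eq _ hg', inv_smul_smul]

end IsStabilizerMul

namespace IsInvariantRegularSet

variable {A : Set G} {ω₀ : Ω}

noncomputable def translation (hA : IsInvariantRegularSet A ω₀) (α : Ω) : G :=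
  (hA.existsUnique_smul_eq ω₀ α).exists.choose

theorem translation_mem (hA : IsInvariantRegularSet A ω₀) (α : Ω) : hA.translation α ∈ A :=
  (hA.existsUnique_smul_eq ω₀ α).exists.choose_spec.1

theorem translation_smul (hA : IsInvariantRegularSet A ω₀) (α : Ω) :
    hA.translation α • ω₀ = α :=
  (hA.existsUnique_smul_eq ω₀ α).exists.choose_spec.2

theorem eq_translation (hA : IsInvariantRegularSet A ω₀) {a : G} (ha : a ∈ A) :
    a = hA.translation (a • ω₀) :=
  (hA.existsUnique_smul_eq ω₀ _).unique ⟨ha, rfl⟩ ⟨hA.translation_mem _, hA.translation_smul _⟩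

theorem translation_base (hA : IsInvariantRegularSet A ω₀) : hA.translation ω₀ = 1 := by
  simpa only [one_smul] using (hA.eq_translation hA.one_mem).symm

theorem translation_smul_of_smul_eq_self (hA : IsInvariantRegularSet A ω₀) {g : G}
    (hg : g • ω₀ = ω₀) (β : Ω) : hA.translation (g • β) = g * hA.translation β * g⁻¹ := by
  rw [hA.eq_translation (hA.conj_mem g hg _ (hA.translation_mem β))]
  congr 1
  rw [mul_smul, mul_smul, inv_smul_eq_iff.2 hg.symm, hA.translation_smul]

noncomputable def add (hA : IsInvariantRegularSet A ω₀) (α β : Ω) : Ω :=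
  hA.translation α • β

theorem add_def (hA : IsInvariantRegularSet A ω₀) (α β : Ω) :
    hA.add α β = hA.translation α • β :=
  rfl

theorem add_eq_of_add_smul (hA : IsInvariantRegularSet A ω₀) {add : Ω → Ω → Ω}
    (hadd : ∀ a ∈ A, ∀ β, add (a • ω₀) β = a • β) : hA.add = add := by
  ext α β
  conv_rhs => rw [← hA.translation_smul α]
  exact (hadd _ (hA.translation_mem α) β).symm

theorem zero_add (hA : IsInvariantRegularSet A ω₀) (β : Ω) : hA.add ω₀ β = β := by
  rw [add_def, translation_base, one_smul]

theorem add_zero (hA : IsInvariantRegularSet A ω₀) (α : Ω) : hA.add α ω₀ = α :=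
  hA.translation_smul α

theorem existsUnique_add_right_eq (hA : IsInvariantRegularSet A ω₀) (α β : Ω) :
    ∃! x, hA.add α x = β :=
  (MulAction.bijective (hA.translation α)).existsUnique β

theorem existsUnique_add_left_eq (hA : IsInvariantRegularSet A ω₀) (α β : Ω) :
    ∃! y, hA.add y α = β := by
  obtain ⟨c, ⟨hc, hcα⟩, huniq⟩ := hA.existsUnique_smul_eq α β
  refine ⟨c • ω₀, ?_, fun y hy => ?_⟩
  · show hA.translation (c • ω₀) • α = β
    rwa [← hA.eq_translation hc]
  · rw [← huniq _ ⟨hA.translation_mem y, hy⟩, translation_smul]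

theorem add_comm_of_add_eq_zero (hA : IsInvariantRegularSet A ω₀) {α β : Ω}
    (h : hA.add α β = ω₀) : hA.add β α = ω₀ := by
  have hβ : hA.translation β = (hA.translation α)⁻¹ := by
    rw [hA.eq_translation (hA.inv_mem _ (hA.translation_mem α)), eq_inv_smul_iff.2 h]
  rw [add_def, hβ, inv_smul_eq_iff, translation_smul]

variable {ω₁ : Ω} {mul : Ω → Ω → Ω}

theorem mul_add (hA : IsInvariantRegularSet A ω₀) (hM : IsStabilizerMul G ω₀ ω₁ mul)
    (α β γ : Ω) : mul α (hA.add β γ) = hA.add (mul α β) (mul α γ) := by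
  by_cases hα : α = ω₀
  · rw [hα, hM.zero_mul, hM.zero_mul, hM.zero_mul, zero_add]
  obtain ⟨g, hg, rfl⟩ := hM.exists_smul_eq α hα
  rw [hM.mul_smul_eq g hg, hM.mul_smul_eq g hg, hM.mul_smul_eq g hg, add_def, add_def,
    hA.translation_smul_of_smul_eq_self hg, mul_smul, mul_smul, inv_smul_smul]

theorem exists_add_add_eq_add_mul (hA : IsInvariantRegularSet A ω₀)
    (hM : IsStabilizerMul G ω₀ ω₁ mul) (hω : ω₀ ≠ ω₁) (α β : Ω) :
    ∃ d, d ≠ ω₀ ∧ ∀ x, hA.add α (hA.add β x) = hA.add (hA.add α β) (mul d x) := by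
  have hh : ((hA.translation (hA.add α β))⁻¹ * (hA.translation α * hA.translation β)) • ω₀ =
      ω₀ := by
    rw [mul_smul, inv_smul_eq_iff, mul_smul, hA.translation_smul, add_def, hA.translation_smul]
  refine ⟨_ • ω₁, smul_ne_of_smul_eq_self hh (Ne.symm hω), fun x => ?_⟩
  rw [hM.mul_smul_eq _ hh, add_def, add_def, add_def, smul_smul, smul_smul,
    mul_inv_cancel_left]

noncomputable def neardomain (hA : IsInvariantRegularSet A ω₀) (hM : IsStabilizerMul G ω₀ ω₁ mul)
    (hω : ω₀ ≠ ω₁) : Neardomain Ω where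
  add := hA.add
  mul := mul
  zero := ω₀
  one := ω₁
  zero_add := hA.zero_add
  add_zero := hA.add_zero
  addL := hA.existsUnique_add_right_eq
  addR := hA.existsUnique_add_left_eq
  neg_comm _ _ := hA.add_comm_of_add_eq_zero
  one_ne_zero := Ne.symm hω
  mul_ne_zero _ _ := hM.mul_ne_zero
  mul_assoc _ _ c hα hβ _ := hM.mul_assoc hα hβ c
  one_mul β _ := hM.one_mul β
  mul_one _ := hM.mul_one
  inv_ex _ := hM.exists_inv hω
  zero_mul := hM.zero_mul
  left_distrib := hA.mul_add hM
  d_ex := hA.exists_add_add_eq_add_mul hM hω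

end IsInvariantRegularSet

end

/-- Let `G` be sharply 2-transitive on `Ω` with distinct base
points `ω₀, ω₁`, and let `A` be the associated set (`A = J∘ν` if `char G ≠ 2`,
`A = J ∪ {1} = {g | g² = 1}` if `char G = 2`).  Defining
`α +₀ β = a(β)` for the unique `a ∈ A` with `a(ω₀) = α`, and
`α ·₁ β = g(β)` for the unique `g` in the stabilizer of `ω₀` with
`g(ω₁) = α` (and `α ·₁ β = ω₀` when `α = ω₀` or `β = ω₀`),
the triple `(Ω, +₀, ·₁)` is a neardomain with `0 = ω₀` and `1 = ω₁`. -/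
theorem stmt17 {Ω : Type*} (G : Subgroup (Equiv.Perm Ω))
    (hsharp : ∀ α₁ α₂ β₁ β₂ : Ω, α₁ ≠ α₂ → β₁ ≠ β₂ →
      ∃! g : G, (g : Equiv.Perm Ω) α₁ = β₁ ∧ (g : Equiv.Perm Ω) α₂ = β₂)
    (ω₀ ω₁ : Ω) (hω : ω₀ ≠ ω₁)
    (A : Set G)
    -- if char G ≠ 2, i.e. there is an involution ν fixing ω₀, then A = J∘ν
    (hA1 : ∀ ν : G, ν ^ 2 = 1 → ν ≠ 1 → (ν : Equiv.Perm Ω) ω₀ = ω₀ →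
      A = {g : G | ∃ j : G, j ^ 2 = 1 ∧ j ≠ 1 ∧ g = j * ν})
    -- if char G = 2, i.e. all involutions are fixed-point-free, then A = J ∪ {1}
    (hA2 : (∀ j : G, j ^ 2 = 1 → j ≠ 1 → ∀ x : Ω, (j : Equiv.Perm Ω) x ≠ x) →
      A = {g : G | g ^ 2 = 1})
    (add : Ω → Ω → Ω)
    (hadd : ∀ a : G, a ∈ A → ∀ β : Ω,
      add ((a : Equiv.Perm Ω) ω₀) β = (a : Equiv.Perm Ω) β)
    (mul : Ω → Ω → Ω)
    (hmul1 : ∀ g : G, (g : Equiv.Perm Ω) ω₀ = ω₀ → ∀ β : Ω,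
      mul ((g : Equiv.Perm Ω) ω₁) β = (g : Equiv.Perm Ω) β)
    (hmul0 : ∀ β : Ω, mul ω₀ β = ω₀) :
    ∃ D : Neardomain Ω,
      D.add = add ∧ D.mul = mul ∧ D.zero = ω₀ ∧ D.one = ω₁ := by
  have hG : IsSharplyTwoTransitive G Ω := hsharp
  have hM : IsStabilizerMul G ω₀ ω₁ mul :=
    ⟨fun _ hα => hG.exists_stabilizer_smul_eq hω hα, hmul1, hmul0⟩
  have hA : IsInvariantRegularSet A ω₀ := by
    by_cases hfree : ∀ j : G, j ^ 2 = 1 → j ≠ 1 → ∀ x : Ω, (j : Equiv.Perm Ω) x ≠ x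
    · rw [hA2 hfree]
      exact hG.isInvariantRegularSet_sq_eq_one ω₀ hfree
    push Not at hfree
    obtain ⟨j, hj, hj1, δ, hδ⟩ := hfree
    obtain ⟨g, hg⟩ := hG.exists_smul_eq δ ω₀
    have hν : orderOf (g * j * g⁻¹) = 2 := by
      rw [orderOf_conj, orderOf_eq_prime_iff]
      exact ⟨hj, hj1⟩
    have hνω := conj_smul_eq_self hg hδ
    have hAν : A = {a : G | ∃ k : G, orderOf k = 2 ∧ a = k * (g * j * g⁻¹)} := by
      rw [hA1 _ (orderOf_eq_prime_iff.1 hν).1 (orderOf_eq_prime_iff.1 hν).2 hνω]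
      simp only [orderOf_eq_prime_iff, and_assoc]
    rw [hAν] at hadd ⊢
    exact hG.isInvariantRegularSet_mul_involution hν hνω (hG.injOn_smul_of_add_smul hω hadd)
  exact ⟨hA.neardomain hM hω, hA.add_eq_of_add_smul hadd, rfl, rfl, rfl⟩
end
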